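/- Let q ∈ ℂ* not a root of unity, m ∈ ℤ≥0, t = q^{-m}. The first Macdonald operator M = ∑_{j=1}^N (∏_{i≠j}(X_i − q^{-m}X_j)/(X_i − X_j)) τ_j preserves the space Q_{m,q}^{trig} of q-deformed m-quasiinvariant Laurent polynomials: F ∈ ℂ[X_1^{±1},…,X_N^{±1}] such that (1 − s_{ij})F is divisible by ∏_{p=−m}^{m}(X_i − q^pX_j) for all i < j. -/

import Mathlib

/- STATEMENT 15: Let q ∈ ℂ* not be a root of unity, m ∈ ℤ≥0, t = q^{-m}.  The
first Macdonald operator M = ∑_j (∏_{i≠j}(X_i − tX_j)/(X_i − X_j)) τ_j preserves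
the space Q_{m,q}^{trig} of q-deformed m-quasiinvariant Laurent polynomials:
F with (1 − s_{ij})F divisible by ∏_{p=−m}^{m}(X_i − q^p X_j) for all i < j.

Laurent polynomials are realized as the group algebra L of ℤ^N; the statement
"MF ∈ Q" is expressed denominator-free: (∏_j d_j)·G = ∑_j n_j·(∏_{j'≠j} d_{j'})·τ_jF
for some G ∈ Q, where d_j = ∏_{i≠j}(X_i − X_j), n_j = ∏_{i≠j}(X_i − tX_j). -/

noncomputable section

abbrev Laur (N : ℕ) := AddMonoidAlgebra ℂ (Fin N → ℤ)

/-- the monomial X_i -/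
noncomputable def XL {N : ℕ} (i : Fin N) : Laur N :=
  AddMonoidAlgebra.single (Pi.single i (1 : ℤ)) (1 : ℂ)

/-- the transposition s_{ij} of the variables X_i, X_j -/
noncomputable def sL {N : ℕ} (i j : Fin N) : Laur N →ₗ[ℂ] Laur N :=
  AddMonoidAlgebra.mapDomainLinearMap ℂ ℂ (fun m : Fin N → ℤ => m ∘ (Equiv.swap i j))

/-- the shift operator τ_j : X_j ↦ qX_j -/
noncomputable def tauL {N : ℕ} (q : ℂ) (j : Fin N) : Laur N →ₗ[ℂ] Laur N :=
  Finsupp.lsum ℂ (fun m : Fin N → ℤ => LinearMap.toSpanSingleton ℂ (Laur N)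
    ((q ^ (m j)) • (AddMonoidAlgebra.single m (1 : ℂ) : Laur N)))
    ∘ₗ (AddMonoidAlgebra.coeffLinearEquiv ℂ).toLinearMap

/-- the space of q-deformed m-quasiinvariant Laurent polynomials -/
noncomputable def Qtrig (N : ℕ) (m : ℕ) (q : ℂ) : Set (Laur N) :=
  {F | ∀ i j : Fin N, i < j → ∃ G : Laur N,
    F - sL i j F =
      (∏ p ∈ Finset.Icc (-(m : ℤ)) (m : ℤ), (XL i - (q ^ p) • XL j)) * G}

/-!
The linear form `X_a - c X_b` (`a ≠ b`, `c ≠ 0`) is prime: it generates the kernel of the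
substitution `X_a ↦ c X_b`. Write `M F = S / D` with `D = ∏_j d_j = ± ∏_{a<b} (X_a - X_b)^2`
and `S = ∑_j n_j (∏_{j' ≠ j} d_{j'}) τ_j F`. For `a < b` and `s = s_{ab}`, `S` is
`s`-equivariant in `F`, so `S - sS` is `S` applied to `F - sF = Π H`, where
`Π = ∏_{|p| ≤ m} (X_a - q^p X_b)`. For every `|p| ≤ m` and `j`, `X_a - q^p X_b` divides
`n_j · τ_j Π`, while `X_a - X_b` divides each `∏_{j' ≠ j} d_{j'}`.

With `p = 0`, `(X_a - X_b)^2` divides `S - sS`, and also `S + sS` because `X_a - X_b ∣ S` and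
`s` negates `X_a - X_b`; hence `D ∣ S`. For `G = S / D` and `p ≠ 0`, `X_a - q^p X_b` divides
`D (G - sG) = S - sS` but, as `q^p ≠ 1`, not `D`; for `p = 0` it divides the antisymmetric
`G - sG`. Since `q` is not a root of unity these factors are pairwise non-associate, so `Π`
divides `G - sG`.
-/

open Finset

theorem Finset.prod_pow_dvd_of_prime {α M : Type*} [CommMonoidWithZero M] [IsCancelMulZero M]
    {s : Finset α} {p : α → M} {e : α → ℕ} {n : M} (hp : ∀ i ∈ s, Prime (p i))
    (hs : (s : Set α).Pairwise fun i j => ¬ p i ∣ p j) (hn : ∀ i ∈ s, p i ^ e i ∣ n) :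
    ∏ i ∈ s, p i ^ e i ∣ n := by
  classical
  induction s using Finset.induction_on generalizing n with
  | empty => simp
  | insert a s has ih =>
    obtain ⟨g, rfl⟩ := hn a (mem_insert_self a s)
    rw [prod_insert has]
    refine mul_dvd_mul_left _ (ih (fun i hi => hp i (mem_insert_of_mem hi))
      (hs.mono (by simp)) fun i hi => ?_)
    have hia : i ≠ a := by rintro rfl; exact has hi
    have hpi := hp i (mem_insert_of_mem hi)
    refine hpi.pow_dvd_of_dvd_mul_left _ (fun h => ?_) (hn i (mem_insert_of_mem hi))
    exact hs (by simp [hi]) (by simp) hia (hpi.dvd_of_dvd_pow h)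

theorem Finset.prod_erase_comp_perm {ι M : Type*} [Fintype ι] [DecidableEq ι] [CommMonoid M]
    (σ : Equiv.Perm ι) (f : ι → M) (j : ι) :
    ∏ i ∈ univ.erase j, f (σ i) = ∏ i ∈ univ.erase (σ j), f i :=
  prod_equiv σ (by simp) (by simp)

theorem Finset.prod_prod_erase_eq_prod_lt {ι M : Type*} [Fintype ι] [LinearOrder ι]
    [CommMonoid M] (f : ι → ι → M) :
    ∏ j, ∏ i ∈ univ.erase j, f i j =
      ∏ x : ι × ι with x.1 < x.2, f x.1 x.2 * f x.2 x.1 := by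
  rw [← prod_finset_product_right univ.offDiag univ (fun j => univ.erase j) (by simp)
    (f := fun x => f x.1 x.2),
    ← prod_filter_mul_prod_filter_not univ.offDiag (fun x => x.1 < x.2), prod_mul_distrib]
  congr 1
  · exact prod_congr (by ext; simp +contextual [ne_of_lt]) fun _ _ => rfl
  · refine prod_nbij' Prod.swap Prod.swap ?_ ?_ (fun _ _ => rfl) (fun _ _ => rfl) (fun _ _ => rfl)
    · intro x hx
      simp only [not_lt, mem_filter, mem_offDiag, mem_univ, ne_eq, true_and, Prod.fst_swap,
        Prod.snd_swap] at hx ⊢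
      exact lt_of_le_of_ne hx.2 (Ne.symm hx.1)
    · intro x hx
      simp only [mem_filter, mem_univ, true_and, not_lt, mem_offDiag, Prod.fst_swap,
        Prod.snd_swap, ne_eq] at hx ⊢
      exact ⟨hx.ne', hx.le⟩

lemma zpow_injective_of_pow_ne_one {G₀ : Type*} [GroupWithZero G₀] {q : G₀} (hq0 : q ≠ 0)
    (hq : ∀ n : ℕ, n ≠ 0 → q ^ n ≠ 1) :
    Function.Injective fun p : ℤ => q ^ p := by
  have : ¬ IsOfFinOrder (Units.mk0 q hq0) := by
    rw [isOfFinOrder_iff_pow_eq_one]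
    rintro ⟨n, hn, h⟩
    exact hq n hn.ne' (by simpa [Units.ext_iff] using h)
  intro p p' h
  exact injective_zpow_iff_not_isOfFinOrder.mpr this (Units.ext (by simpa using h))

namespace AddMonoidAlgebra

variable {R A ι : Type*} [CommSemiring R] [CommSemiring A] [Algebra R A]

def substUnits [Fintype ι] (u : ι → Aˣ) : AddMonoidAlgebra R (ι → ℤ) →ₐ[R] A :=
  lift R A (ι → ℤ) <| (Units.coeHom A).comp
    { toFun := fun v => ∏ i, u i ^ v.toAdd i
      map_one' := by simp
      map_mul' := fun v w => by simp [zpow_add, prod_mul_distrib] }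

lemma substUnits_single [Fintype ι] (u : ι → Aˣ) (v : ι → ℤ) (r : R) :
    substUnits u (single v r) = r • (↑(∏ i, u i ^ v i) : A) :=
  lift_single _ _ _

variable [DecidableEq ι]

variable (R) in
def varUnit (i : ι) : (AddMonoidAlgebra R (ι → ℤ))ˣ :=
  (of R (ι → ℤ)).toHomUnits (Multiplicative.ofAdd (Pi.single i 1))

lemma val_varUnit (i : ι) :
    (varUnit R i : AddMonoidAlgebra R (ι → ℤ)) = single (Pi.single i 1) 1 := rfl

variable [Fintype ι]

lemma single_one_eq_prod_varUnit (v : ι → ℤ) :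
    (single v 1 : AddMonoidAlgebra R (ι → ℤ)) = ↑(∏ i, varUnit R i ^ v i) := by
  simp only [varUnit, ← map_zpow, ← map_prod, ← ofAdd_zsmul, ← ofAdd_sum,
    MonoidHom.coe_toHomUnits, of_apply]
  congr
  ext k
  simp [Pi.single_apply]

lemma algHom_apply_single_one (φ : AddMonoidAlgebra R (ι → ℤ) →ₐ[R] A) (v : ι → ℤ) :
    φ (single v 1) =
      ↑(∏ i, Units.map (φ : AddMonoidAlgebra R (ι → ℤ) →* A) (varUnit R i) ^ v i) := by
  simp only [single_one_eq_prod_varUnit, ← map_zpow, ← map_prod, Units.coe_map]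
  rfl

lemma algHom_ext_varUnit {φ ψ : AddMonoidAlgebra R (ι → ℤ) →ₐ[R] A}
    (h : ∀ i : ι, φ (varUnit R i) = ψ (varUnit R i)) : φ = ψ := by
  refine algHom_ext (fun v => ?_) (Subsingleton.elim _ _)
  simp only [algHom_apply_single_one]
  congr! 3 with i
  exact Units.ext (h i)

lemma substUnits_varUnit (u : ι → Aˣ) (i : ι) :
    substUnits (R := R) u (varUnit R i) = u i := by
  simp [substUnits, val_varUnit, Pi.single_apply]

lemma sub_dvd_sub_of_forall_ne {B : Type*} [CommRing B] [Algebra R B]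
    {φ ψ : AddMonoidAlgebra R (ι → ℤ) →ₐ[R] B} (a : ι)
    (h : ∀ i ≠ a, φ (varUnit R i) = ψ (varUnit R i)) (f : AddMonoidAlgebra R (ι → ℤ)) :
    φ (varUnit R a) - ψ (varUnit R a) ∣ φ f - ψ f := by
  set I := Ideal.span {φ (varUnit R a) - ψ (varUnit R a)}
  rw [← Ideal.mem_span_singleton, ← Ideal.Quotient.eq]
  have : (Ideal.Quotient.mkₐ R I).comp φ = (Ideal.Quotient.mkₐ R I).comp ψ := by
    refine algHom_ext_varUnit fun i => ?_
    simp only [AlgHom.comp_apply, Ideal.Quotient.mkₐ_eq_mk, Ideal.Quotient.eq]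
    obtain rfl | hi := eq_or_ne i a
    · exact Ideal.mem_span_singleton_self _
    · simp [h i hi]
  exact DFunLike.congr_fun this f

end AddMonoidAlgebra

namespace Laur

open AddMonoidAlgebra

variable {N : ℕ}

lemma val_varUnit_eq_XL (i : Fin N) : (varUnit ℂ i : Laur N) = XL i := rfl

lemma algHom_ext_XL {φ ψ : Laur N →ₐ[ℂ] Laur N} (h : ∀ i, φ (XL i) = ψ (XL i)) :
    φ = ψ :=
  algHom_ext_varUnit h

lemma XL_ne_zero (i : Fin N) : (XL i : Laur N) ≠ 0 := (varUnit ℂ i).ne_zero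

lemma eq_and_eq_of_smul_XL_sub_smul_XL_eq_zero {i j : Fin N} {α β : ℂ} (hα : α ≠ 0)
    (h : α • XL i - β • XL j = 0) : i = j ∧ α = β := by
  have h1 : (single (Pi.single i 1) α : Laur N) = single (Pi.single j 1) β := by
    simpa [XL, smul_single', sub_eq_zero] using h
  rcases single_inj.mp h1 with ⟨hij, rfl⟩ | ⟨rfl, -⟩
  · exact ⟨by simpa [Pi.single_apply, eq_comm] using congrFun hij i, rfl⟩
  · exact absurd rfl hα

def scaledXL (c : ℂ) (hc : c ≠ 0) (i : Fin N) : (Laur N)ˣ :=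
  Units.map (algebraMap ℂ (Laur N) : ℂ →* Laur N) (Units.mk0 c hc) * varUnit ℂ i

lemma val_scaledXL (c : ℂ) (hc : c ≠ 0) (i : Fin N) :
    (scaledXL c hc i : Laur N) = c • XL i := by
  simp [scaledXL, Algebra.smul_def, val_varUnit_eq_XL]

def tauAlg (q : ℂ) (hq0 : q ≠ 0) (j : Fin N) : Laur N →ₐ[ℂ] Laur N :=
  substUnits (Function.update (varUnit ℂ) j (scaledXL q hq0 j))

def swapAlg (a b : Fin N) : Laur N →ₐ[ℂ] Laur N :=
  substUnits fun i => varUnit ℂ (Equiv.swap a b i)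

/-- The substitution `X_a ↦ c X_b`. -/
def evalAlg (a b : Fin N) (c : ℂ) (hc : c ≠ 0) : Laur N →ₐ[ℂ] Laur N :=
  substUnits (Function.update (varUnit ℂ) a (scaledXL c hc b))

lemma tauAlg_XL (q : ℂ) (hq0 : q ≠ 0) (j i : Fin N) :
    tauAlg q hq0 j (XL i) = if i = j then q • XL j else XL i := by
  rw [← val_varUnit_eq_XL, tauAlg, substUnits_varUnit]
  split_ifs with h <;> simp [h, val_scaledXL, val_varUnit_eq_XL]

lemma swapAlg_XL (a b i : Fin N) : swapAlg a b (XL i) = XL (Equiv.swap a b i) := by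
  rw [← val_varUnit_eq_XL, swapAlg, substUnits_varUnit, val_varUnit_eq_XL]

lemma evalAlg_XL (a b : Fin N) (c : ℂ) (hc : c ≠ 0) (i : Fin N) :
    evalAlg a b c hc (XL i) = if i = a then c • XL b else XL i := by
  rw [← val_varUnit_eq_XL, evalAlg, substUnits_varUnit]
  split_ifs with h <;> simp [h, val_scaledXL, val_varUnit_eq_XL]

lemma tauL_apply (q : ℂ) (hq0 : q ≠ 0) (j : Fin N) (f : Laur N) :
    tauL q j f = tauAlg q hq0 j f := by
  induction f using induction_linear with
  | zero => simp
  | add f g hf hg => rw [map_add, map_add, hf, hg]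
  | single v c =>
    set u : Fin N → ℂˣ := Pi.mulSingle j (Units.mk0 q hq0)
    have hupdate : Function.update (varUnit ℂ) j (scaledXL q hq0 j) =
        fun i => Units.map (algebraMap ℂ (Laur N) : ℂ →* Laur N) (u i) * varUnit ℂ i := by
      ext1 i
      obtain rfl | h := eq_or_ne i j <;> simp [*, u, scaledXL]
    have hu : ∏ i, u i ^ v i = Units.mk0 q hq0 ^ v j := by
      simp only [u]
      rw [prod_eq_single j (fun i _ hi => by rw [Pi.mulSingle_eq_of_ne hi, one_zpow])
        (fun h => absurd (mem_univ j) h), Pi.mulSingle_eq_same]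
    simp only [tauAlg, hupdate, substUnits_single, mul_zpow, prod_mul_distrib, ← map_zpow,
      ← map_prod, hu, Units.val_mul, Units.coe_map, ← single_one_eq_prod_varUnit]
    simp [tauL, Algebra.smul_def]

lemma sL_apply (a b : Fin N) (f : Laur N) : sL a b f = swapAlg a b f := by
  induction f using induction_linear with
  | zero => simp
  | add f g hf hg => rw [map_add, map_add, hf, hg]
  | single v c =>
    rw [sL, mapDomainLinearMap_single, swapAlg, substUnits_single,
      Fintype.prod_equiv (Equiv.swap a b) _ (fun i => varUnit ℂ i ^ (v ∘ Equiv.swap a b) i)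
        (fun i => by simp), ← single_one_eq_prod_varUnit, smul_single', mul_one]

lemma swapAlg_comp_tauAlg (a b : Fin N) (q : ℂ) (hq0 : q ≠ 0) (j : Fin N) :
    (swapAlg a b).comp (tauAlg q hq0 j) =
      (tauAlg q hq0 (Equiv.swap a b j)).comp (swapAlg a b) :=
  algHom_ext_XL fun i => by
    by_cases h : i = j <;> simp [h, tauAlg_XL, swapAlg_XL]

lemma evalAlg_one_comp_swapAlg {a b : Fin N} (hab : a ≠ b) :
    (evalAlg a b 1 one_ne_zero).comp (swapAlg a b) = evalAlg a b 1 one_ne_zero :=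
  algHom_ext_XL fun i => by
    simp only [AlgHom.comp_apply, swapAlg_XL, evalAlg_XL, one_smul, Equiv.swap_apply_def]
    split_ifs <;> simp_all

section LinearFactor

variable {a b : Fin N} {c : ℂ} (hc : c ≠ 0)
include hc

lemma evalAlg_smul_XL_sub_smul_XL (hab : a ≠ b) (α β : ℂ) :
    evalAlg a b c hc (α • XL a - β • XL b) = (α * c - β) • XL b := by
  simp [evalAlg_XL, hab.symm, smul_smul, sub_smul]

lemma XL_sub_smul_XL_dvd_iff (hab : a ≠ b) {f : Laur N} :
    XL a - c • XL b ∣ f ↔ evalAlg a b c hc f = 0 := by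
  have hℓ : evalAlg a b c hc (XL a - c • XL b) = 0 := by
    simpa using evalAlg_smul_XL_sub_smul_XL hc hab 1 c
  refine ⟨fun ⟨g, hg⟩ => by rw [hg, map_mul, hℓ, zero_mul], fun h => ?_⟩
  have := sub_dvd_sub_of_forall_ne (φ := AlgHom.id ℂ (Laur N)) (ψ := evalAlg a b c hc) a
    (fun i hi => by simp [val_varUnit_eq_XL, evalAlg_XL, hi]) f
  simpa [val_varUnit_eq_XL, evalAlg_XL, h] using this

lemma prime_XL_sub_smul_XL (hab : a ≠ b) : Prime (XL a - c • XL b : Laur N) := by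
  have not_dvd_one : ¬ XL a - c • XL b ∣ (1 : Laur N) := by
    simp [XL_sub_smul_XL_dvd_iff hc hab]
  refine ⟨fun h => hab (eq_and_eq_of_smul_XL_sub_smul_XL_eq_zero one_ne_zero (β := c)
    (by simpa using h)).1, fun h => not_dvd_one h.dvd, fun x y h => ?_⟩
  simpa only [XL_sub_smul_XL_dvd_iff hc hab, map_mul, mul_eq_zero] using h

lemma eq_one_of_XL_sub_smul_XL_dvd_XL_sub_XL (hab : a ≠ b) {i j : Fin N} (hij : i ≠ j)
    (h : XL a - c • XL b ∣ XL i - XL j) : c = 1 ∧ (i = a ∧ j = b ∨ i = b ∧ j = a) := by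
  rw [XL_sub_smul_XL_dvd_iff hc hab, map_sub, evalAlg_XL, evalAlg_XL] at h
  split_ifs at h with hi hj hj
  · exact absurd (hi.trans hj.symm) hij
  · have := eq_and_eq_of_smul_XL_sub_smul_XL_eq_zero hc (i := b) (j := j) (β := 1)
      (by simpa using h)
    exact ⟨this.2, .inl ⟨hi, this.1.symm⟩⟩
  · have := eq_and_eq_of_smul_XL_sub_smul_XL_eq_zero one_ne_zero (i := i) (j := b)
      (β := c) (by simpa using h)
    exact ⟨this.2.symm, .inr ⟨this.1, hj⟩⟩
  · exact absurd (eq_and_eq_of_smul_XL_sub_smul_XL_eq_zero one_ne_zero (i := i) (j := j)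
      (β := 1) (by simpa using h)).1 hij

end LinearFactor

lemma XL_sub_XL_dvd_iff {a b : Fin N} (hab : a ≠ b) {f : Laur N} :
    XL a - XL b ∣ f ↔ evalAlg a b 1 one_ne_zero f = 0 := by
  simpa using XL_sub_smul_XL_dvd_iff one_ne_zero hab (f := f)

lemma sq_dvd_add_swapAlg {a b : Fin N} (hab : a ≠ b) {V : Laur N} (h : XL a - XL b ∣ V) :
    (XL a - XL b) ^ 2 ∣ V + swapAlg a b V := by
  obtain ⟨W, rfl⟩ := h
  have hW : XL a - XL b ∣ W - swapAlg a b W := by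
    rw [XL_sub_XL_dvd_iff hab, map_sub, ← AlgHom.comp_apply, evalAlg_one_comp_swapAlg hab,
      sub_self]
  obtain ⟨K, hK⟩ := hW
  refine ⟨K, ?_⟩
  rw [map_mul, map_sub, swapAlg_XL, swapAlg_XL, Equiv.swap_apply_left, Equiv.swap_apply_right]
  linear_combination (XL a - XL b) * hK

variable (q : ℂ) (m : ℕ)

def numFactor (c : ℂ) (j : Fin N) : Laur N := ∏ i ∈ univ.erase j, (XL i - c • XL j)

def denFactor (j : Fin N) : Laur N := ∏ i ∈ univ.erase j, (XL i - XL j)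

def cofactor (j : Fin N) : Laur N := ∏ j' ∈ univ.erase j, denFactor j'

def denProd : Laur N := ∏ j, denFactor j

/-- `denProd * M F`: the `j`-th coefficient of `M` is `numFactor q^(-m) j / denFactor j`. -/
def clearedMacdonald (F : Laur N) : Laur N :=
  ∑ j, numFactor (q ^ (-(m : ℤ))) j * cofactor j * tauL q j F

def quasiFactor (a b : Fin N) : Laur N := ∏ p ∈ Icc (-(m : ℤ)) m, (XL a - q ^ p • XL b)

lemma clearedMacdonald_sub (F F' : Laur N) :
    clearedMacdonald q m F - clearedMacdonald q m F' = clearedMacdonald q m (F - F') := by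
  simp only [clearedMacdonald, map_sub, mul_sub, sum_sub_distrib]

section Swap

variable (a b : Fin N)

lemma swapAlg_numFactor (c : ℂ) (j : Fin N) :
    swapAlg a b (numFactor c j) = numFactor c (Equiv.swap a b j) := by
  simp only [numFactor, map_prod, map_sub, map_smul, swapAlg_XL]
  exact prod_erase_comp_perm (Equiv.swap a b) (fun i => XL i - c • XL (Equiv.swap a b j)) j

lemma swapAlg_denFactor (j : Fin N) :
    swapAlg a b (denFactor j) = denFactor (Equiv.swap a b j) := by
  simpa [numFactor, denFactor] using swapAlg_numFactor a b 1 j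

lemma swapAlg_cofactor (j : Fin N) : swapAlg a b (cofactor j) = cofactor (Equiv.swap a b j) := by
  simp only [cofactor, map_prod, swapAlg_denFactor]
  exact prod_erase_comp_perm (Equiv.swap a b) denFactor j

lemma swapAlg_denProd : swapAlg a b (denProd : Laur N) = denProd := by
  simp only [denProd, map_prod, swapAlg_denFactor]
  exact Equiv.prod_comp (Equiv.swap a b) denFactor

lemma swapAlg_clearedMacdonald {q : ℂ} (hq0 : q ≠ 0) (F : Laur N) :
    swapAlg a b (clearedMacdonald q m F) = clearedMacdonald q m (swapAlg a b F) := by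
  simp only [clearedMacdonald, tauL_apply q hq0, map_sum, map_mul, swapAlg_numFactor,
    swapAlg_cofactor, ← AlgHom.comp_apply, swapAlg_comp_tauAlg]
  exact Equiv.sum_comp (Equiv.swap a b)
    (fun j => numFactor _ j * cofactor j * tauAlg q hq0 j (swapAlg a b F))

end Swap

lemma XL_sub_XL_dvd_denFactor {i j : Fin N} (h : i ≠ j) :
    XL i - XL j ∣ (denFactor j : Laur N) :=
  dvd_prod_of_mem (fun i => XL i - XL j) (mem_erase.2 ⟨h, mem_univ i⟩)

lemma denFactor_dvd_cofactor {j j' : Fin N} (h : j' ≠ j) :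
    denFactor j' ∣ (cofactor j : Laur N) :=
  dvd_prod_of_mem denFactor (mem_erase.2 ⟨h, mem_univ j'⟩)

lemma XL_sub_XL_dvd_cofactor {a b : Fin N} (hab : a ≠ b) (j : Fin N) :
    XL a - XL b ∣ (cofactor j : Laur N) := by
  obtain rfl | hja := eq_or_ne j a
  · exact (XL_sub_XL_dvd_denFactor hab).trans (denFactor_dvd_cofactor hab.symm)
  · rw [← neg_sub, neg_dvd]
    exact (XL_sub_XL_dvd_denFactor hab.symm).trans (denFactor_dvd_cofactor hja.symm)

lemma XL_sub_XL_dvd_clearedMacdonald {a b : Fin N} (hab : a ≠ b) (F : Laur N) :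
    XL a - XL b ∣ clearedMacdonald q m F :=
  dvd_sum fun j _ => ((XL_sub_XL_dvd_cofactor hab j).mul_left _).mul_right _

lemma denProd_eq : (denProd : Laur N) = (-1) ^ #{x : Fin N × Fin N | x.1 < x.2} *
    ∏ x : Fin N × Fin N with x.1 < x.2, (XL x.1 - XL x.2) ^ 2 := by
  unfold denProd denFactor
  rw [prod_prod_erase_eq_prod_lt, ← prod_const, ← prod_mul_distrib]
  exact prod_congr rfl fun x _ => by ring

lemma not_dvd_denProd {a b : Fin N} (hab : a ≠ b) {c : ℂ} (hc : c ≠ 0) (hc1 : c ≠ 1) :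
    ¬ XL a - c • XL b ∣ (denProd : Laur N) := by
  simp only [denProd, denFactor, (prime_XL_sub_smul_XL hc hab).dvd_finsetProd_iff, mem_univ,
    mem_erase, and_true, not_exists, not_and, forall_const]
  exact fun j i hij h => hc1 (eq_one_of_XL_sub_smul_XL_dvd_XL_sub_XL hc hab hij h).1

variable {q m} (hq0 : q ≠ 0)
include hq0

/-- For `j = a`, `p = m` (resp. `j = b`, `p = -m`) the factor comes from the numerator;
otherwise `τ_j` carries the factor of index `p + 1` (resp. `p - 1`, or `p` when `j ∉ {a, b}`)
of `quasiFactor` to a multiple of `X_a - q^p X_b`. -/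
lemma dvd_numFactor_mul_tauAlg_quasiFactor {a b : Fin N} (hab : a ≠ b) {p : ℤ}
    (hp : p ∈ Icc (-(m : ℤ)) m) (j : Fin N) :
    XL a - q ^ p • XL b ∣
      numFactor (q ^ (-(m : ℤ))) j * tauAlg q hq0 j (quasiFactor q m a b) := by
  have dvd_tau {p'} (hp' : p' ∈ Icc (-(m : ℤ)) m)
      (h : XL a - q ^ p • XL b ∣ tauAlg q hq0 j (XL a - q ^ p' • XL b)) :
      XL a - q ^ p • XL b ∣ tauAlg q hq0 j (quasiFactor q m a b) :=
    h.trans (by rw [quasiFactor, map_prod]; exact dvd_prod_of_mem _ hp')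
  rw [mem_Icc] at hp
  obtain rfl | hja := eq_or_ne j a
  · obtain rfl | hpm := eq_or_ne p m
    · have h : XL b - q ^ (-(m : ℤ)) • XL j =
          (-q ^ (-(m : ℤ))) • (XL j - q ^ (m : ℤ) • XL b) := by
        rw [smul_sub, smul_smul, neg_mul, ← zpow_add₀ hq0, neg_add_cancel, zpow_zero, neg_smul,
          neg_smul, one_smul, sub_neg_eq_add, neg_add_eq_sub]
      refine Dvd.dvd.mul_right ((dvd_smul_of_dvd (-q ^ (-(m : ℤ))) dvd_rfl).trans ?_) _
      rw [← h]
      exact dvd_prod_of_mem (fun i => XL i - _ • XL j) (mem_erase.2 ⟨hab.symm, mem_univ b⟩)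
    · refine Dvd.dvd.mul_left (dvd_tau (p' := p + 1) (mem_Icc.2 ⟨by omega, by omega⟩) ?_) _
      rw [map_sub, map_smul, tauAlg_XL, tauAlg_XL, if_pos rfl, if_neg hab.symm,
        zpow_add_one₀ hq0, mul_comm, ← smul_smul, ← smul_sub]
      exact dvd_smul_of_dvd _ dvd_rfl
  obtain rfl | hjb := eq_or_ne j b
  · obtain rfl | hpm := eq_or_ne p (-m)
    · exact Dvd.dvd.mul_right
        (dvd_prod_of_mem (fun i => XL i - _ • XL j) (mem_erase.2 ⟨hab, mem_univ a⟩)) _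
    · refine Dvd.dvd.mul_left (dvd_tau (p' := p - 1) (mem_Icc.2 ⟨by omega, by omega⟩) ?_) _
      rw [map_sub, map_smul, tauAlg_XL, tauAlg_XL, if_neg hab, if_pos rfl, smul_smul,
        ← zpow_add_one₀ hq0, sub_add_cancel]
  · refine Dvd.dvd.mul_left (dvd_tau (mem_Icc.2 hp) ?_) _
    rw [map_sub, map_smul, tauAlg_XL, tauAlg_XL, if_neg (Ne.symm hja), if_neg (Ne.symm hjb)]

lemma dvd_clearedMacdonald_quasiFactor_mul {a b : Fin N} (hab : a ≠ b) {p : ℤ}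
    (hp : p ∈ Icc (-(m : ℤ)) m) (H : Laur N) :
    (XL a - q ^ p • XL b) * (XL a - XL b) ∣ clearedMacdonald q m (quasiFactor q m a b * H) := by
  simp only [clearedMacdonald, tauL_apply q hq0, map_mul]
  refine dvd_sum fun j _ => ?_
  have := mul_dvd_mul (dvd_numFactor_mul_tauAlg_quasiFactor hq0 hab hp j)
    (XL_sub_XL_dvd_cofactor hab j)
  exact (this.mul_right (tauAlg q hq0 j H)).trans (dvd_of_eq (by ring))

lemma sq_dvd_clearedMacdonald {F : Laur N} (hF : F ∈ Qtrig N m q) {a b : Fin N} (hab : a < b) :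
    (XL a - XL b) ^ 2 ∣ clearedMacdonald q m F := by
  obtain ⟨H, hH⟩ := hF a b hab
  have hdiff : clearedMacdonald q m F - swapAlg a b (clearedMacdonald q m F) =
      clearedMacdonald q m (quasiFactor q m a b * H) := by
    rw [swapAlg_clearedMacdonald _ _ _ hq0, clearedMacdonald_sub, ← sL_apply, hH, quasiFactor]
  have hdiff_dvd :
      (XL a - XL b) ^ 2 ∣ clearedMacdonald q m F - swapAlg a b (clearedMacdonald q m F) := by
    simpa [hdiff, sq] using dvd_clearedMacdonald_quasiFactor_mul hq0 hab.ne (p := 0) (by simp) H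
  have hsum_dvd := sq_dvd_add_swapAlg hab.ne (XL_sub_XL_dvd_clearedMacdonald q m hab.ne F)
  have h2 : IsUnit (2 : Laur N) := by
    simpa only [map_ofNat] using
      (isUnit_iff_ne_zero.mpr (two_ne_zero (α := ℂ))).map (algebraMap ℂ (Laur N))
  rw [← h2.dvd_mul_left]
  convert dvd_add hsum_dvd hdiff_dvd using 1
  ring

lemma denProd_dvd_clearedMacdonald {F : Laur N} (hF : F ∈ Qtrig N m q) :
    denProd ∣ clearedMacdonald q m F := by
  rw [denProd_eq, (isUnit_neg_one.pow _).mul_left_dvd]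
  refine prod_pow_dvd_of_prime (fun x hx => ?_) (fun x hx y hy hxy h => ?_)
    (fun x hx => sq_dvd_clearedMacdonald hq0 hF (mem_filter.1 hx).2)
  · simpa using prime_XL_sub_smul_XL one_ne_zero (mem_filter.1 hx).2.ne
  · simp only [coe_filter, mem_univ, true_and, Set.mem_ofPred_eq] at hx hy
    obtain ⟨-, hyx | hyx⟩ :=
      eq_one_of_XL_sub_smul_XL_dvd_XL_sub_XL one_ne_zero hx.ne hy.ne (by simpa using h)
    · exact hxy (Prod.ext hyx.1.symm hyx.2.symm)
    · exact absurd (hyx.1 ▸ hyx.2 ▸ hy) hx.asymm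

variable (hq : ∀ n : ℕ, n ≠ 0 → q ^ n ≠ 1)
include hq

lemma quasiFactor_dvd {a b : Fin N} (hab : a ≠ b) {f : Laur N}
    (h : ∀ p ∈ Icc (-(m : ℤ)) m, XL a - q ^ p • XL b ∣ f) :
    quasiFactor q m a b ∣ f := by
  have hdistinct : (Icc (-(m : ℤ)) m : Set ℤ).Pairwise
      fun p p' => ¬ XL a - q ^ p • XL b ∣ XL a - q ^ p' • XL b := by
    intro p _ p' _ hpp' hdvd
    rw [XL_sub_smul_XL_dvd_iff (zpow_ne_zero p hq0) hab] at hdvd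
    have := evalAlg_smul_XL_sub_smul_XL (zpow_ne_zero p hq0) hab 1 (q ^ p')
    rw [one_smul, hdvd, eq_comm, smul_eq_zero, one_mul, sub_eq_zero] at this
    exact hpp' (zpow_injective_of_pow_ne_one hq0 hq (this.resolve_right (XL_ne_zero b)))
  simpa [quasiFactor] using prod_pow_dvd_of_prime (e := fun _ => 1)
    (fun p _ => prime_XL_sub_smul_XL (zpow_ne_zero p hq0) hab) hdistinct (by simpa using h)

lemma mem_Qtrig_of_denProd_mul_eq {F G : Laur N} (hF : F ∈ Qtrig N m q)
    (hG : denProd * G = clearedMacdonald q m F) : G ∈ Qtrig N m q := by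
  intro a b hab
  obtain ⟨H, hH⟩ := hF a b hab
  refine quasiFactor_dvd hq0 hq hab.ne fun p hp => ?_
  rw [sL_apply]
  obtain rfl | hp0 := eq_or_ne p 0
  · rw [zpow_zero, one_smul, XL_sub_XL_dvd_iff hab.ne, map_sub, ← AlgHom.comp_apply,
      evalAlg_one_comp_swapAlg hab.ne, sub_self]
  have hD : denProd * (G - swapAlg a b G) = clearedMacdonald q m (quasiFactor q m a b * H) := by
    rw [mul_sub, hG, ← swapAlg_denProd a b, ← map_mul, hG, swapAlg_clearedMacdonald _ _ _ hq0,
      clearedMacdonald_sub, ← sL_apply, hH, quasiFactor]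
  have hdvd := dvd_of_mul_right_dvd (hD ▸ dvd_clearedMacdonald_quasiFactor_mul hq0 hab.ne hp H)
  refine ((prime_XL_sub_smul_XL (zpow_ne_zero p hq0) hab.ne).dvd_or_dvd hdvd).resolve_left
    (not_dvd_denProd hab.ne (zpow_ne_zero p hq0) fun h => hp0 ?_)
  exact zpow_injective_of_pow_ne_one hq0 hq (h.trans (zpow_zero q).symm)

end Laur

theorem statement15 (N : ℕ) (m : ℕ) (q : ℂ) (hq0 : q ≠ 0)
    (hq : ∀ n : ℕ, n ≠ 0 → q ^ n ≠ 1) :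
    ∀ F ∈ Qtrig N m q, ∃ G ∈ Qtrig N m q,
      (∏ j : Fin N, ∏ i ∈ Finset.univ.erase j, (XL i - XL j)) * G =
        ∑ j : Fin N,
          (∏ i ∈ Finset.univ.erase j, (XL i - (q ^ (-(m : ℤ))) • XL j)) *
            (∏ j' ∈ Finset.univ.erase j, ∏ i ∈ Finset.univ.erase j', (XL i - XL j')) *
            tauL q j F := by
  intro F hF
  obtain ⟨G, hG⟩ := Laur.denProd_dvd_clearedMacdonald hq0 hF
  exact ⟨G, Laur.mem_Qtrig_of_denProd_mul_eq hq0 hq hF hG.symm, hG.symm⟩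

end
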